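/- Let S > 0 and r > 0, and let u₀ : ℝ → ℝ be a twice continuously differentiable function satisfying u₀''(x) + S·f(u₀(x)) + (2S/r)(2u₀(x)−1)(u₀'(x))² = 0 on ℝ with lim_{x→−∞} u₀(x) = 1, lim_{x→+∞} u₀(x) = 0, and lim_{x→±∞} u₀'(x) = 0. Then for every x ∈ ℝ, (u₀'(x))² = (r²/(8S))·e^{(4S/r)(u₀(x) − u₀(x)²)} − (r/2)·(u₀(x) − u₀(x)²) − r²/(8S). -/

import Mathlib

/-!
With `q = u - u²` and `a = 4S/r`, the quantity `(u'² + (r/2) q + r²/(8S)) e^{-a q}` has derivative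
`2 u' e^{-a q}` times the left-hand side of the equation, so it is constant along solutions. At
`+∞` it tends to `r²/(8S)`, and solving for `u'²` gives the formula.
-/

open Real Filter Topology

noncomputable def fpoly (u : ℝ) : ℝ := u * (2 * u - 1) * (1 - u)

noncomputable def clineEnergy (S r u p : ℝ) : ℝ :=
  (p ^ 2 + r / 2 * (u - u ^ 2) + r ^ 2 / (8 * S)) * exp (-(4 * S / r * (u - u ^ 2)))

lemma hasDerivAt_clineEnergy {S r : ℝ} (hS : S ≠ 0) (hr : r ≠ 0) {u u' : ℝ → ℝ} {u'' x : ℝ}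
    (hu : HasDerivAt u (u' x) x) (hu' : HasDerivAt u' u'' x) :
    HasDerivAt (fun y => clineEnergy S r (u y) (u' y))
      (2 * u' x * exp (-(4 * S / r * (u x - u x ^ 2)))
        * (u'' + S * fpoly (u x) + 2 * S / r * (2 * u x - 1) * u' x ^ 2)) x := by
  have hq : HasDerivAt (fun y => u y - u y ^ 2) (u' x - 2 * u x ^ 1 * u' x) x :=
    hu.sub (hu.pow 2)
  have hfactor : HasDerivAt (fun y => u' y ^ 2 + r / 2 * (u y - u y ^ 2) + r ^ 2 / (8 * S))
      (2 * u' x ^ 1 * u'' + r / 2 * (u' x - 2 * u x ^ 1 * u' x)) x :=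
    ((hu'.pow 2).add (hq.const_mul (r / 2))).add_const _
  have hexp : HasDerivAt (fun y => exp (-(4 * S / r * (u y - u y ^ 2))))
      (exp (-(4 * S / r * (u x - u x ^ 2))) * -(4 * S / r * (u' x - 2 * u x ^ 1 * u' x))) x :=
    ((hq.const_mul (4 * S / r)).neg).exp
  refine (hfactor.mul hexp).congr_deriv ?_
  simp only [fpoly]
  field_simp
  ring

lemma tendsto_clineEnergy {α : Type*} {l : Filter α} (S r : ℝ) {u p : α → ℝ}
    (hu : Tendsto u l (𝓝 0)) (hp : Tendsto p l (𝓝 0)) :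
    Tendsto (fun y => clineEnergy S r (u y) (p y)) l (𝓝 (r ^ 2 / (8 * S))) := by
  have hcont : Continuous fun z : ℝ × ℝ => clineEnergy S r z.1 z.2 := by
    unfold clineEnergy; fun_prop
  simpa [clineEnergy, Function.comp_def] using (hcont.tendsto (0, 0)).comp (hu.prodMk_nhds hp)

lemma eq_of_hasDerivAt_zero_of_tendsto {G : ℝ → ℝ} {l : Filter ℝ} [l.NeBot] {L : ℝ}
    (hG : ∀ x, HasDerivAt G 0 x) (hlim : Tendsto G l (𝓝 L)) (x : ℝ) : G x = L := by
  have hconst : G = fun _ => G x := funext fun y =>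
    is_const_of_deriv_eq_zero (fun z => (hG z).differentiableAt) (fun z => (hG z).deriv) y x
  rw [hconst] at hlim
  exact tendsto_nhds_unique tendsto_const_nhds hlim

lemma sq_eq_of_clineEnergy_eq {S r u p : ℝ} (h : clineEnergy S r u p = r ^ 2 / (8 * S)) :
    p ^ 2 = r ^ 2 / (8 * S) * exp (4 * S / r * (u - u ^ 2))
      - r / 2 * (u - u ^ 2) - r ^ 2 / (8 * S) := by
  rw [clineEnergy, exp_neg, ← div_eq_mul_inv, div_eq_iff (exp_ne_zero _)] at h
  linarith

theorem first_integral (S r : ℝ) (hS : 0 < S) (hr : 0 < r)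
    (u₀ : ℝ → ℝ) (hu : ContDiff ℝ 2 u₀)
    (hode : ∀ x : ℝ, deriv (deriv u₀) x + S * fpoly (u₀ x)
      + (2 * S / r) * (2 * u₀ x - 1) * (deriv u₀ x) ^ 2 = 0)
    (hlim0 : Tendsto u₀ atTop (𝓝 0))
    (hlim0' : Tendsto (deriv u₀) atTop (𝓝 0)) :
    ∀ x : ℝ, (deriv u₀ x) ^ 2
      = r ^ 2 / (8 * S) * Real.exp ((4 * S / r) * (u₀ x - (u₀ x) ^ 2))
        - r / 2 * (u₀ x - (u₀ x) ^ 2) - r ^ 2 / (8 * S) := by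
  have hderiv : ∀ x, HasDerivAt (fun y => clineEnergy S r (u₀ y) (deriv u₀ y)) 0 x := by
    intro x
    have h := hasDerivAt_clineEnergy hS.ne' hr.ne'
      ((hu.differentiable (by norm_num) x).hasDerivAt)
      (hu.differentiable_deriv_two x).hasDerivAt
    rwa [hode x, mul_zero] at h
  exact fun x => sq_eq_of_clineEnergy_eq
    (eq_of_hasDerivAt_zero_of_tendsto hderiv (tendsto_clineEnergy S r hlim0 hlim0') x)
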